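/- Let u ∈ ℝⁿ be nonzero, and let m₁, m₂ ∈ {0,1}ⁿ be binary masks with m₂ ≤ m₁ pointwise (i.e., the support of m₂ is contained in that of m₁). Let v₁ = m₁ ⊙ u and v₂ = m₂ ⊙ u, and assume v₂ ≠ 0. Then ⟨u, v₂⟩/(‖u‖‖v₂‖) ≤ ⟨u, v₁⟩/(‖u‖‖v₁‖), i.e., the angle ∠(u, v₁) ≤ ∠(u, v₂). -/
import Mathlib


open scoped RealInnerProductSpace

lemma mask_inner_eq (n : ℕ) (u v : EuclideanSpace ℝ (Fin n)) (m : Fin n → ℝ)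
    (hm : ∀ i, m i = 0 ∨ m i = 1) (hv : ∀ i, v i = m i * u i) :
    ⟪u, v⟫ = ‖v‖ ^ 2 := by
  rw [← real_inner_self_eq_norm_sq]
  simp only [PiLp.inner_apply, RCLike.inner_apply, conj_trivial]
  apply Finset.sum_congr rfl
  intro i _
  rcases hm i with h | h <;> simp [hv i, h] <;> ring

theorem stmt3 (n : ℕ) (u v₁ v₂ : EuclideanSpace ℝ (Fin n)) (m₁ m₂ : Fin n → ℝ)
    (hm₁ : ∀ i, m₁ i = 0 ∨ m₁ i = 1) (hm₂ : ∀ i, m₂ i = 0 ∨ m₂ i = 1)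
    (hle : ∀ i, m₂ i ≤ m₁ i)
    (hv₁ : ∀ i, v₁ i = m₁ i * u i) (hv₂ : ∀ i, v₂ i = m₂ i * u i)
    (hu : u ≠ 0) (hv₂ne : v₂ ≠ 0) :
    ⟪u, v₂⟫ / (‖u‖ * ‖v₂‖) ≤ ⟪u, v₁⟫ / (‖u‖ * ‖v₁‖) ∧
      InnerProductGeometry.angle u v₁ ≤ InnerProductGeometry.angle u v₂ := by
  have h1 := mask_inner_eq n u v₁ m₁ hm₁ hv₁
  have h2 := mask_inner_eq n u v₂ m₂ hm₂ hv₂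
  have hnle : ‖v₂‖ ≤ ‖v₁‖ := by
    rw [EuclideanSpace.norm_eq, EuclideanSpace.norm_eq]
    apply Real.sqrt_le_sqrt
    apply Finset.sum_le_sum
    intro i _
    rw [hv₁ i, hv₂ i]
    have hm2nn : 0 ≤ m₂ i := by rcases hm₂ i with h | h <;> simp [h]
    have : |m₂ i * u i| ≤ |m₁ i * u i| := by
      rw [abs_mul, abs_mul]
      apply mul_le_mul_of_nonneg_right _ (abs_nonneg _)
      rw [abs_of_nonneg hm2nn, abs_of_nonneg (hm2nn.trans (hle i))]
      exact hle i
    calc ‖m₂ i * u i‖ ^ 2 = |m₂ i * u i| ^ 2 := by rw [Real.norm_eq_abs]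
      _ ≤ |m₁ i * u i| ^ 2 := by gcongr
      _ = ‖m₁ i * u i‖ ^ 2 := by rw [Real.norm_eq_abs]
  have hu0 : (0:ℝ) < ‖u‖ := norm_pos_iff.mpr hu
  have hv20 : (0:ℝ) < ‖v₂‖ := norm_pos_iff.mpr hv₂ne
  have hv10 : (0:ℝ) < ‖v₁‖ := lt_of_lt_of_le hv20 hnle
  have key : ⟪u, v₂⟫ / (‖u‖ * ‖v₂‖) ≤ ⟪u, v₁⟫ / (‖u‖ * ‖v₁‖) := by
    rw [h1, h2]
    rw [div_le_div_iff₀ (by positivity) (by positivity)]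
    have h0 : 0 ≤ ‖u‖ * ‖v₁‖ * ‖v₂‖ * (‖v₁‖ - ‖v₂‖) :=
      mul_nonneg (by positivity) (sub_nonneg.mpr hnle)
    nlinarith [h0]
  refine ⟨key, ?_⟩
  rw [InnerProductGeometry.angle, InnerProductGeometry.angle]
  rw [Real.arccos, Real.arccos]
  have := Real.monotone_arcsin key
  linarith
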